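/- If a finite set of existential rules R is parallelised by a finite rule set R', then for every instance I, every null occurring in chase_∞(I,R) occurs in at most h atoms of chase_∞(I,R), where h is the maximal number of atoms in a rule head of R'. -/

import Mathlib

open scoped Classical
noncomputable section

namespace ER

/-- Terms: constants or variables (variables occurring in instances are called nulls). -/
inductive Term where
  | const : ℕ → Term
  | var : ℕ → Term
deriving DecidableEq

def Term.isConst : Term → Prop
  | .const _ => True
  | .var _ => False

/-- An atom `p(t₁,…,tₙ)`. -/
structure Atom where
  pred : ℕ
  args : List Term
deriving DecidableEq

def Atom.terms (a : Atom) : Set Term := {t | t ∈ a.args}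
def Atom.vars (a : Atom) : Set ℕ := {v | Term.var v ∈ a.args}

def termsOf (S : Set Atom) : Set Term := ⋃ a ∈ S, a.terms
def varsOf (S : Set Atom) : Set ℕ := ⋃ a ∈ S, a.vars
/-- The nulls (non-constant terms) occurring in a set of atoms. -/
def nullsOf (S : Set Atom) : Set Term := {t | t ∈ termsOf S ∧ ¬ t.isConst}

def Term.subst (σ : ℕ → Term) : Term → Term
  | .const c => .const c
  | .var v => σ v

def Atom.subst (σ : ℕ → Term) (a : Atom) : Atom := ⟨a.pred, a.args.map (Term.subst σ)⟩
def substSet (σ : ℕ → Term) (S : Set Atom) : Set Atom := (Atom.subst σ) '' S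

/-- A homomorphism from `S1` to `S2`: a substitution of variables by terms mapping `S1` into `S2`. -/
def isHom (σ : ℕ → Term) (S1 S2 : Set Atom) : Prop := substSet σ S1 ⊆ S2

/-- An injective homomorphism (injective on the terms of the source). -/
def isInjHom (σ : ℕ → Term) (S1 S2 : Set Atom) : Prop :=
  isHom σ S1 S2 ∧ Set.InjOn (Term.subst σ) (termsOf S1)

/-- An instance is a finite set of ground atoms. -/
def IsInstance (I : Set Atom) : Prop := I.Finite ∧ ∀ t ∈ termsOf I, t.isConst

/-- An existential rule, given by its body and head. -/
structure Rule where
  body : Set Atom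
  head : Set Atom

def Rule.frontier (R : Rule) : Set ℕ := varsOf R.body ∩ varsOf R.head
def Rule.exist (R : Rule) : Set ℕ := varsOf R.head \ varsOf R.body

/-- Well-formed rule: finite non-empty body and head, no constants. -/
def WfRule (R : Rule) : Prop :=
  R.body.Finite ∧ R.head.Finite ∧ R.body.Nonempty ∧ R.head.Nonempty ∧
  ∀ t ∈ termsOf (R.body ∪ R.head), ¬ t.isConst

def WfList (L : List Rule) : Prop := ∀ R ∈ L, WfRule R

/-- Restriction of a substitution to a set of variables (default value elsewhere). -/
def restrict (f : ℕ → Term) (F : Set ℕ) : ℕ → Term :=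
  fun v => if v ∈ F then f v else Term.const 0

/-- A semi-oblivious naming of nulls for the rules of `L`: the null created for an
existential variable depends only on the rule and the restriction of the trigger to the
frontier, and distinct such data yield distinct nulls. -/
def SONaming (L : List Rule) (ν : Rule → (ℕ → Term) → ℕ → ℕ) : Prop :=
  (∀ R ∈ L, ∀ f g : ℕ → Term,
      restrict f R.frontier = restrict g R.frontier → ν R f = ν R g) ∧
  (∀ R ∈ L, ∀ R' ∈ L, ∀ f f' x x', ν R f x = ν R' f' x' →
      R = R' ∧ restrict f R.frontier = restrict f' R'.frontier ∧ x = x')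

/-- The safe extension of a trigger `π`, replacing each existential variable by its null. -/
def safeSub (ν : Rule → (ℕ → Term) → ℕ → ℕ) (R : Rule) (π : ℕ → Term) : ℕ → Term :=
  fun y => if y ∈ R.exist then Term.var (ν R (restrict π R.frontier) y) else π y

/-- One breadth-first semi-oblivious chase step. -/
def chaseStep (ν : Rule → (ℕ → Term) → ℕ → ℕ) (L : List Rule) (S : Set Atom) : Set Atom :=
  S ∪ {a | ∃ R ∈ L, ∃ π : ℕ → Term, isHom π R.body S ∧ a ∈ substSet (safeSub ν R π) R.head}

/-- The breadth-first semi-oblivious chase. -/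
def chaseF (ν : Rule → (ℕ → Term) → ℕ → ℕ) (L : List Rule) (I : Set Atom) : ℕ → Set Atom
  | 0 => I
  | k + 1 => chaseStep ν L (chaseF ν L I k)

def chaseInf (ν : Rule → (ℕ → Term) → ℕ → ℕ) (L : List Rule) (I : Set Atom) : Set Atom :=
  ⋃ k, chaseF ν L I k

/-- `L'` parallelises `L`. -/
def Parallelises (L' L : List Rule) : Prop :=
  ∀ ν ν', SONaming L ν → SONaming L' ν' → ∀ I, IsInstance I →
    (∃ σ, isInjHom σ (chaseInf ν L I) (chaseF ν' L' I 1)) ∧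
    (∃ σ, isHom σ (chaseF ν' L' I 1) (chaseInf ν L I))

def Parallelisable (L : List Rule) : Prop := ∃ L', WfList L' ∧ Parallelises L' L

/-- Boundedness of the semi-oblivious chase, uniformly over all instances. -/
def Bounded (L : List Rule) : Prop :=
  ∃ k, ∀ ν, SONaming L ν → ∀ I, IsInstance I → chaseF ν L I k = chaseInf ν L I

def ChaseFinite (L : List Rule) : Prop :=
  ∀ ν, SONaming L ν → ∀ I, IsInstance I → ∃ k, chaseF ν L I k = chaseInf ν L I

/-- Two atoms are `T`-linked if they share a term of `T`. -/
def linked (T : Set Term) (a b : Atom) : Prop := ∃ t ∈ T, t ∈ a.terms ∧ t ∈ b.terms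

/-- Connectivity in `S` by a path of atoms where consecutive atoms share a term of `T`. -/
def connectedIn (S : Set Atom) (T : Set Term) (a b : Atom) : Prop :=
  a ∈ S ∧ b ∈ S ∧ Relation.ReflTransGen (fun x y => x ∈ S ∧ y ∈ S ∧ linked T x y) a b

/-- `P` is closed in `S` w.r.t. `T`-linkedness. -/
def closedIn (S : Set Atom) (T : Set Term) (P : Set Atom) : Prop :=
  ∀ a ∈ S, ∀ b ∈ P, linked T a b → a ∈ P

/-- A piece of `S` w.r.t. `T`: a non-empty subset closed under `T`-linkedness and minimal such. -/
def IsPiece (S : Set Atom) (T : Set Term) (P : Set Atom) : Prop :=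
  P.Nonempty ∧ P ⊆ S ∧ closedIn S T P ∧
  ∀ P', P' ⊆ P → P'.Nonempty → closedIn S T P' → P' = P

/-- A single-piece rule: its head is a piece of itself w.r.t. its existential variables. -/
def SinglePiece (R : Rule) : Prop := IsPiece R.head (Term.var '' R.exist) R.head

/-- The rule used at step `k` of a derivation. -/
def ruleAt (L : List Rule) (r : ℕ → ℕ) (k : ℕ) : Rule := L.getD (r k) ⟨∅, ∅⟩

/-- The set of atoms produced by the `k`-th rule application of a derivation. -/
def producedAt (ν : Rule → (ℕ → Term) → ℕ → ℕ) (L : List Rule) (r : ℕ → ℕ)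
    (π : ℕ → ℕ → Term) (k : ℕ) : Set Atom :=
  substSet (safeSub ν (ruleAt L r k) (π k)) (ruleAt L r k).head

def derivState (ν : Rule → (ℕ → Term) → ℕ → ℕ) (L : List Rule) (I : Set Atom)
    (r : ℕ → ℕ) (π : ℕ → ℕ → Term) : ℕ → Set Atom
  | 0 => I
  | k + 1 => derivState ν L I r π k ∪ producedAt ν L r π k

/-- An `R`-derivation of length `n` from `I`: each step applies a trigger. -/
def IsDeriv (ν : Rule → (ℕ → Term) → ℕ → ℕ) (L : List Rule) (I : Set Atom) (n : ℕ)
    (r : ℕ → ℕ) (π : ℕ → ℕ → Term) : Prop :=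
  ∀ k < n, r k < L.length ∧ isHom (π k) (ruleAt L r k).body (derivState ν L I r π k)

/-- A pieceful derivation: each trigger maps its rule's frontier entirely into the terms of
the initial instance, or entirely into the terms produced by a single earlier application. -/
def PiecefulDeriv (ν : Rule → (ℕ → Term) → ℕ → ℕ) (L : List Rule) (I : Set Atom) (n : ℕ)
    (r : ℕ → ℕ) (π : ℕ → ℕ → Term) : Prop :=
  ∀ k < n, (∀ x ∈ (ruleAt L r k).frontier, π k x ∈ termsOf I) ∨
    ∃ j < k, ∀ x ∈ (ruleAt L r k).frontier, π k x ∈ termsOf (producedAt ν L r π j)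

/-- A pieceful rule set: every derivation from every instance is pieceful. -/
def PiecefulSet (L : List Rule) : Prop :=
  ∀ ν, SONaming L ν → ∀ I, IsInstance I → ∀ n r π,
    IsDeriv ν L I n r π → PiecefulDeriv ν L I n r π

/-- First-order structures for the semantics of rules. -/
structure Struct where
  D : Type
  nonempty : Nonempty D
  interp : ℕ → List D → Prop
  cinterp : ℕ → D

def evalT (M : Struct) (v : ℕ → M.D) : Term → M.D
  | .const c => M.cinterp c
  | .var x => v x

def holdsA (M : Struct) (v : ℕ → M.D) (a : Atom) : Prop :=
  M.interp a.pred (a.args.map (evalT M v))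

/-- Satisfaction of (the universal-existential closure of) a rule in a structure. -/
def satRule (M : Struct) (R : Rule) : Prop :=
  ∀ v : ℕ → M.D, (∀ a ∈ R.body, holdsA M v a) →
    ∃ w : ℕ → M.D, (∀ x ∈ varsOf R.body, w x = v x) ∧ ∀ a ∈ R.head, holdsA M w a

/-- Separating variables of `S' ⊆ S`: variables occurring both in `S'` and in `S \ S'`. -/
def sepVars (S' S : Set Atom) : Set ℕ := varsOf S' ∩ varsOf (S \ S')

/-- A piece-unifier `(S', H', u)` of a set of atoms `S` with a rule `R`. -/
def IsPieceUnifier (S : Set Atom) (R : Rule) (S' H' : Set Atom) (u : ℕ → Term) : Prop :=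
  Disjoint (varsOf S) (varsOf (R.body ∪ R.head)) ∧
  S'.Nonempty ∧ S' ⊆ S ∧ H' ⊆ R.head ∧
  (∀ x, x ∉ R.frontier ∪ varsOf S' → u x = Term.var x) ∧
  (∀ x ∈ R.frontier ∪ varsOf S', ∃ y ∈ varsOf R.head, u x = Term.var y) ∧
  (∀ x ∈ R.frontier, ∃ y ∈ R.frontier, u x = Term.var y) ∧
  (∀ x ∈ sepVars S' S, ∃ y ∈ R.frontier, u x = Term.var y) ∧
  substSet u S' = substSet u H'

/-- The existential stability property of a piece-unifier of `body R2` with `R1`. -/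
def StableUnifier (R2 R1 : Rule) (B2' : Set Atom) (u : ℕ → Term) : Prop :=
  (∀ x ∈ R2.frontier, u x ∉ Term.var '' R1.exist) ∨ R2.frontier ⊆ varsOf B2'

/-- The existential composition `R2 ∘_μ R1` w.r.t. a piece-unifier `μ = (B2', H1', u)`
of `body R2` with `R1`. -/
def compose (R2 R1 : Rule) (B2' : Set Atom) (u : ℕ → Term) : Rule :=
  if ∀ x ∈ R2.frontier, u x ∉ Term.var '' R1.exist then
    ⟨substSet u R1.body ∪ substSet u (R2.body \ B2'), substSet u R2.head⟩
  else
    ⟨substSet u R1.body ∪ substSet u (R2.body \ B2'),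
     substSet u R1.head ∪ substSet u R2.head⟩

/-- The closure `R*` of a rule set under existential composition. -/
inductive InClosure (𝒮 : Set Rule) : Rule → Prop
  | base {R : Rule} : R ∈ 𝒮 → InClosure 𝒮 R
  | comp {Ri Rj : Rule} {B' H' : Set Atom} {u : ℕ → Term} :
      InClosure 𝒮 Ri → InClosure 𝒮 Rj →
      IsPieceUnifier Ri.body Rj B' H' u → InClosure 𝒮 (compose Ri Rj B' u)

def ruleSet (L : List Rule) : Set Rule := {R | R ∈ L}

/-- The stability property for a (possibly infinite) rule set. -/
def StableSet (𝒮 : Set Rule) : Prop :=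
  ∀ R1 ∈ 𝒮, ∀ R2 ∈ 𝒮, ∀ B2' H1' u,
    IsPieceUnifier R2.body R1 B2' H1' u → StableUnifier R2 R1 B2' u

/-- `J` is a result of one breadth-first chase step of a (possibly infinite) rule set on `I`,
with fresh pairwise-compatible nulls (semi-oblivious naming). -/
def OneStepResult (𝒮 : Set Rule) (I J : Set Atom) : Prop :=
  ∃ ν : Rule → (ℕ → Term) → ℕ → ℕ,
    (∀ R ∈ 𝒮, ∀ f x, Term.var (ν R f x) ∉ termsOf I) ∧
    (∀ R ∈ 𝒮, ∀ R' ∈ 𝒮, ∀ f f' x x', ν R f x = ν R' f' x' →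
        R = R' ∧ restrict f R.frontier = restrict f' R'.frontier ∧ x = x') ∧
    J = I ∪ {a | ∃ R ∈ 𝒮, ∃ π : ℕ → Term, isHom π R.body I ∧
                  a ∈ substSet (safeSub ν R π) R.head}

/-- `I, R ⊨ q` for a Boolean conjunctive query `q` (a set of atoms). -/
def Entails (L : List Rule) (I q : Set Atom) : Prop :=
  ∀ ν, SONaming L ν → ∃ k σ, isHom σ q (chaseF ν L I k)

/-- The null `t` occurs in at least `n` atoms of `S`. -/
def occursInAtLeast (S : Set Atom) (t : Term) (n : ℕ) : Prop :=
  ∃ F : Set Atom, F ⊆ {a | a ∈ S ∧ t ∈ a.terms} ∧ F.Finite ∧ n ≤ F.ncard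

def FrontierGuarded (R : Rule) : Prop := ∃ a ∈ R.body, R.frontier ⊆ a.vars

def IsDatalog (R : Rule) : Prop := R.exist = ∅ ∧ ∃ a, R.head = {a}

end ER

/-!
Fix a semi-oblivious naming for `L'` and an injective homomorphism `σ` from `chase_∞(I, L)`
into `chase_1(I, L')`. A null `t` of the chase is sent to a term that does not occur in `I`:
the terms of `I` are constants, which `σ` fixes. In one chase step every atom containing a term
not in `I` is produced by a trigger that created that term as a null, and the naming forces
all these triggers to agree on rule and frontier, so these atoms all lie in the image of a
single head of `L'`. Injectivity of `σ` transfers the bound back to the atoms containing `t`.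
-/

namespace ER

theorem mem_termsOf {S : Set Atom} {t : Term} : t ∈ termsOf S ↔ ∃ a ∈ S, t ∈ a.terms := by
  simp [termsOf]

theorem mem_varsOf {S : Set Atom} {v : ℕ} : v ∈ varsOf S ↔ ∃ a ∈ S, Term.var v ∈ a.args := by
  simp [varsOf, Atom.vars]

theorem Atom.mem_terms_subst (σ : ℕ → Term) {a : Atom} {t : Term} (ht : t ∈ a.terms) :
    Term.subst σ t ∈ (Atom.subst σ a).terms :=
  List.mem_map_of_mem ht

theorem isHom.apply_mem_termsOf {π : ℕ → Term} {B S : Set Atom} (hπ : isHom π B S) {y : ℕ}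
    (hy : y ∈ varsOf B) : π y ∈ termsOf S := by
  obtain ⟨a, ha, hya⟩ := mem_varsOf.mp hy
  exact mem_termsOf.mpr ⟨_, hπ ⟨a, ha, rfl⟩, Atom.mem_terms_subst π hya⟩

theorem Rule.mem_varsOf_body_of_notMem_exist {R : Rule} {y : ℕ} (hyH : y ∈ varsOf R.head)
    (hy : y ∉ R.exist) : y ∈ varsOf R.body :=
  not_not.mp fun hyB => hy ⟨hyH, hyB⟩

theorem Term.var_injective : Function.Injective Term.var := fun _ _ h => Term.var.inj h

instance : Countable Term :=
  Function.Injective.countable (f := fun t : Term => match t with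
    | .const c => (Sum.inl c : ℕ ⊕ ℕ)
    | .var v => Sum.inr v) (by rintro (_ | _) (_ | _) h <;> simp_all)

theorem Atom.vars_finite (a : Atom) : a.vars.Finite :=
  a.args.finite_toSet.preimage Term.var_injective.injOn

theorem varsOf_finite {S : Set Atom} (hS : S.Finite) : (varsOf S).Finite :=
  hS.biUnion fun a _ => a.vars_finite

theorem WfRule.frontier_finite {R : Rule} (hR : WfRule R) : R.frontier.Finite :=
  (varsOf_finite hR.1).subset Set.inter_subset_left

theorem restrict_restrict (f : ℕ → Term) (F : Set ℕ) :
    restrict (restrict f F) F = restrict f F := by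
  funext v
  by_cases hv : v ∈ F <;> simp [restrict, hv]

theorem countable_range_restrict {F : Set ℕ} (hF : F.Finite) :
    (Set.range fun f => restrict f F).Countable := by
  have : Finite F := hF
  refine (Set.countable_range fun g : F → Term => fun v =>
    if hv : v ∈ F then g ⟨v, hv⟩ else Term.const 0).mono ?_
  rintro _ ⟨f, rfl⟩
  exact ⟨fun v => f v, funext fun v => by by_cases hv : v ∈ F <;> simp [restrict, hv]⟩

/-- A naming only has to encode injectively a rule of `L`, a restriction to its finite frontier
and a variable, and there are countably many of those. -/
theorem exists_soNaming (L : List Rule) (hL : ∀ R ∈ L, R.frontier.Finite) :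
    ∃ ν, SONaming L ν := by
  set data : Set (Rule × (ℕ → Term) × ℕ) :=
    ⋃ R ∈ L, {R} ×ˢ (Set.range fun f => restrict f R.frontier) ×ˢ Set.univ
  have hdata : data.Countable :=
    L.finite_toSet.countable.biUnion fun R hR =>
      (Set.countable_singleton R).prod
        ((countable_range_restrict (hL R hR)).prod Set.countable_univ)
  obtain ⟨e, he⟩ := Set.countable_iff_exists_injOn.mp hdata
  have hmem : ∀ {R} f x, R ∈ L → (R, restrict f R.frontier, x) ∈ data :=
    fun f _ hR => Set.mem_biUnion hR ⟨rfl, ⟨f, rfl⟩, trivial⟩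
  exact ⟨fun R f x => e (R, restrict f R.frontier, x), fun R _ f g hfg => by simp only [hfg],
    fun R hR R' hR' f f' x x' hee => by simpa using he (hmem f x hR) (hmem f' x' hR') hee⟩

theorem List.eq_of_map_eq_of_injOn {α β : Type*} {f : α → β} {s : Set α} (hf : Set.InjOn f s) :
    ∀ {l₁ l₂ : List α}, (∀ x ∈ l₁, x ∈ s) → (∀ x ∈ l₂, x ∈ s) → l₁.map f = l₂.map f → l₁ = l₂
  | [], [], _, _, _ => rfl
  | x :: l₁, y :: l₂, h₁, h₂, h => by
    simp only [List.map_cons, List.cons.injEq] at h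
    rw [hf (h₁ x (by simp)) (h₂ y (by simp)) h.1,
      List.eq_of_map_eq_of_injOn hf (fun z hz => h₁ z (by simp [hz]))
        (fun z hz => h₂ z (by simp [hz])) h.2]

theorem isInjHom.injOn_atomSubst {σ : ℕ → Term} {C D : Set Atom} (hσ : isInjHom σ C D) :
    Set.InjOn (Atom.subst σ) C := by
  rintro ⟨p, l₁⟩ ha ⟨q, l₂⟩ hb hab
  simp only [Atom.subst, Atom.mk.injEq] at hab
  obtain ⟨rfl, hl⟩ := hab
  obtain rfl : l₁ = l₂ := List.eq_of_map_eq_of_injOn hσ.2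
    (fun t ht => mem_termsOf.mpr ⟨_, ha, ht⟩) (fun t ht => mem_termsOf.mpr ⟨_, hb, ht⟩) hl
  rfl

theorem isInjHom.occurrences_finite_and_ncard_le {σ : ℕ → Term} {C D P : Set Atom}
    (hσ : isInjHom σ C D) {t : Term} (hP : P.Finite)
    (hmaps : ∀ a ∈ C, t ∈ a.terms → Atom.subst σ a ∈ P) :
    {a | a ∈ C ∧ t ∈ a.terms}.Finite ∧ {a | a ∈ C ∧ t ∈ a.terms}.ncard ≤ P.ncard := by
  have hinj : Set.InjOn (Atom.subst σ) {a | a ∈ C ∧ t ∈ a.terms} :=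
    hσ.injOn_atomSubst.mono fun _ ha => ha.1
  have hmaps' : ∀ a ∈ {a | a ∈ C ∧ t ∈ a.terms}, Atom.subst σ a ∈ P :=
    fun a ha => hmaps a ha.1 ha.2
  exact ⟨Set.Finite.of_finite_image (hP.subset (Set.image_subset_iff.mpr hmaps')) hinj,
    Set.ncard_le_ncard_of_injOn _ hmaps' hinj hP⟩

theorem subst_notMem_termsOf_of_isInjHom {σ : ℕ → Term} {I C D : Set Atom}
    (hσ : isInjHom σ C D) (hI : ∀ t ∈ termsOf I, t.isConst) (hIC : I ⊆ C) {t : Term}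
    (ht : t ∈ nullsOf C) : Term.subst σ t ∉ termsOf I := by
  intro hmem
  obtain ⟨c, hc⟩ : ∃ c, Term.subst σ t = Term.const c := by
    cases h : Term.subst σ t with
    | const c => exact ⟨c, rfl⟩
    | var v => exact absurd (hI _ hmem) (by simp [h, Term.isConst])
  have hcC : Term.const c ∈ termsOf C := by
    obtain ⟨a, ha, hca⟩ := mem_termsOf.mp (hc ▸ hmem)
    exact mem_termsOf.mpr ⟨a, hIC ha, hca⟩
  have : t = Term.const c := hσ.2 ht.1 hcC hc
  exact ht.2 (this ▸ trivial)

theorem subset_chaseInf (ν : Rule → (ℕ → Term) → ℕ → ℕ) (L : List Rule) (I : Set Atom) :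
    I ⊆ chaseInf ν L I :=
  Set.subset_iUnion (chaseF ν L I) 0

def triggerOutput (ν : Rule → (ℕ → Term) → ℕ → ℕ) (R : Rule) (π : ℕ → Term) : Set Atom :=
  substSet (safeSub ν R π) R.head

theorem triggerOutput_finite (ν : Rule → (ℕ → Term) → ℕ → ℕ) {R : Rule} (hR : WfRule R)
    (π : ℕ → Term) : (triggerOutput ν R π).Finite :=
  hR.2.1.image _

theorem ncard_triggerOutput_le (ν : Rule → (ℕ → Term) → ℕ → ℕ) {R : Rule} (hR : WfRule R)
    (π : ℕ → Term) : (triggerOutput ν R π).ncard ≤ R.head.ncard :=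
  Set.ncard_image_le hR.2.1

theorem triggerOutput_congr (ν : Rule → (ℕ → Term) → ℕ → ℕ) (R : Rule) {π π' : ℕ → Term}
    (h : restrict π R.frontier = restrict π' R.frontier) :
    triggerOutput ν R π = triggerOutput ν R π' := by
  refine Set.image_congr fun b hb => ?_
  simp only [Atom.subst, Atom.mk.injEq, true_and]
  refine List.map_congr_left fun s hs => ?_
  cases s with
  | const c => rfl
  | var y =>
    by_cases hy : y ∈ R.exist
    · simp [Term.subst, safeSub, hy, h]
    · have hyH : y ∈ varsOf R.head := mem_varsOf.mpr ⟨b, hb, hs⟩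
      have hyF : y ∈ R.frontier := ⟨Rule.mem_varsOf_body_of_notMem_exist hyH hy, hyH⟩
      simpa [Term.subst, safeSub, hy, restrict, hyF] using congrFun h y

theorem mem_termsOf_or_eq_null_of_mem_triggerOutput {ν : Rule → (ℕ → Term) → ℕ → ℕ}
    {R : Rule} {π : ℕ → Term} {S : Set Atom} (hR : WfRule R) (hπ : isHom π R.body S) {b : Atom}
    (hb : b ∈ triggerOutput ν R π) {u : Term} (hu : u ∈ b.terms) :
    u ∈ termsOf S ∨ ∃ y ∈ R.exist, u = Term.var (ν R (restrict π R.frontier) y) := by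
  obtain ⟨a, ha, rfl⟩ := hb
  obtain ⟨s, hs, rfl⟩ := List.mem_map.mp hu
  cases s with
  | const c => exact absurd trivial (hR.2.2.2.2 _ (mem_termsOf.mpr ⟨a, Or.inr ha, hs⟩))
  | var y =>
    by_cases hy : y ∈ R.exist
    · exact Or.inr ⟨y, hy, by simp [Term.subst, safeSub, hy]⟩
    · have hyB := Rule.mem_varsOf_body_of_notMem_exist (mem_varsOf.mpr ⟨a, ha, hs⟩) hy
      simpa [Term.subst, safeSub, hy] using Or.inl (hπ.apply_mem_termsOf hyB)

section ChaseStep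

variable {ν : Rule → (ℕ → Term) → ℕ → ℕ} {L : List Rule} {S : Set Atom} {u : Term}

theorem exists_trigger_of_mem_chaseStep (hL : WfList L) (hu : u ∉ termsOf S) {b : Atom}
    (hb : b ∈ chaseStep ν L S) (hub : u ∈ b.terms) :
    ∃ R ∈ L, ∃ π, b ∈ triggerOutput ν R π ∧
      ∃ y ∈ R.exist, u = Term.var (ν R (restrict π R.frontier) y) := by
  rcases hb with hbS | ⟨R, hR, π, hπ, hbR⟩
  · exact absurd (mem_termsOf.mpr ⟨b, hbS, hub⟩) hu
  · refine ⟨R, hR, π, hbR, ?_⟩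
    exact (mem_termsOf_or_eq_null_of_mem_triggerOutput (hL R hR) hπ hbR hub).resolve_left hu

/-- The naming recovers the rule and the frontier image from an invented null. -/
theorem exists_triggerOutput_superset_occurrences (hL : WfList L) (hν : SONaming L ν)
    (hu : u ∉ termsOf S) {b₀ : Atom} (hb₀ : b₀ ∈ chaseStep ν L S) (hub₀ : u ∈ b₀.terms) :
    ∃ R ∈ L, ∃ π, {b | b ∈ chaseStep ν L S ∧ u ∈ b.terms} ⊆ triggerOutput ν R π := by
  obtain ⟨R₀, hR₀, π₀, -, y₀, -, rfl⟩ := exists_trigger_of_mem_chaseStep hL hu hb₀ hub₀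
  refine ⟨R₀, hR₀, π₀, fun b ⟨hb, hub⟩ => ?_⟩
  obtain ⟨R, hR, π, hbR, y, -, hy⟩ := exists_trigger_of_mem_chaseStep hL hu hb hub
  obtain ⟨rfl, hres, -⟩ := hν.2 R hR R₀ hR₀ _ _ _ _ (Term.var.inj hy.symm)
  rw [restrict_restrict, restrict_restrict] at hres
  rwa [← triggerOutput_congr ν R hres]

end ChaseStep

theorem null_occurrence_bound_general (L L' : List Rule) (hL' : WfList L')
    (hpar : Parallelises L' L) (h : ℕ) (hh : ∀ R ∈ L', R.head.ncard ≤ h) :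
    ∀ ν, SONaming L ν → ∀ I, IsInstance I →
      ∀ t ∈ nullsOf (chaseInf ν L I),
        {a | a ∈ chaseInf ν L I ∧ t ∈ a.terms}.Finite ∧
        {a | a ∈ chaseInf ν L I ∧ t ∈ a.terms}.ncard ≤ h := by
  intro ν hν I hI t ht
  obtain ⟨ν', hν'⟩ := exists_soNaming L' fun R hR => (hL' R hR).frontier_finite
  obtain ⟨⟨σ, hσ⟩, -⟩ := hpar ν ν' hν hν' I hI
  have hfresh : Term.subst σ t ∉ termsOf I :=
    subst_notMem_termsOf_of_isInjHom hσ hI.2 (subset_chaseInf ν L I) ht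
  obtain ⟨a₀, ha₀, hta₀⟩ := mem_termsOf.mp ht.1
  obtain ⟨R, hR, π, hsub⟩ := exists_triggerOutput_superset_occurrences hL' hν' hfresh
    (hσ.1 ⟨a₀, ha₀, rfl⟩) (Atom.mem_terms_subst σ hta₀)
  obtain ⟨hfin, hcard⟩ := hσ.occurrences_finite_and_ncard_le (triggerOutput_finite ν' (hL' R hR) π)
    fun a ha hta => hsub ⟨hσ.1 ⟨a, ha, rfl⟩, Atom.mem_terms_subst σ hta⟩
  exact ⟨hfin, hcard.trans ((ncard_triggerOutput_le ν' (hL' R hR) π).trans (hh R hR))⟩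

/-- if `L'` parallelises `L` and every head of `L'` has at most `h` atoms,
then every null of the chase occurs in at most `h` atoms. -/
theorem null_occurrence_bound (L L' : List Rule) (hL : WfList L) (hL' : WfList L')
    (hpar : Parallelises L' L) (h : ℕ) (hh : ∀ R ∈ L', R.head.ncard ≤ h) :
    ∀ ν, SONaming L ν → ∀ I, IsInstance I →
      ∀ t ∈ nullsOf (chaseInf ν L I),
        {a | a ∈ chaseInf ν L I ∧ t ∈ a.terms}.Finite ∧
        {a | a ∈ chaseInf ν L I ∧ t ∈ a.terms}.ncard ≤ h :=
  null_occurrence_bound_general L L' hL' hpar h hh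
end ER
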